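/- arXiv:math/9801076 — 4 statements merged into one kernel-verified Lean document; each statement's English description precedes it below -/
import Mathlib

section
/- Let A be a commutative ring, I an ideal of A, and f ∈ I an element that is not a zero divisor. Then the quotient of the Rees algebra A[It] by the principal ideal generated by 1 − ft is isomorphic as an A-algebra to the subring A[I/f] of the localization A_f generated by A together with all elements g/f with g ∈ I. -/
open Polynomial

section Aux

variable {A : Type*} [CommRing A]

theorem aux_dvd (f : A) {p : A[X]}
    (hp : aeval (IsLocalization.Away.invSelf f (S := Localization.Away f)) p = 0) :
    (C f * X - 1) ∣ p := by
  rw [← AdjoinRoot.mk_eq_zero]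
  have h := (Localization.awayEquivAdjoin f).symm.injective
  apply h
  rw [map_zero]
  rw [show (Localization.awayEquivAdjoin f).symm (AdjoinRoot.mk (C f * X - 1) p)
      = aeval (IsLocalization.Away.invSelf f (S := Localization.Away f)) p from ?_, hp]
  have : (Localization.awayEquivAdjoin f).symm (AdjoinRoot.mk (C f * X - 1) p)
      = AdjoinRoot.liftAlgHom (C f * X - 1) (Algebra.ofId _ _) (IsLocalization.Away.invSelf f)
        (by show aeval _ _ = _; simp only [map_sub, map_mul, aeval_C, aeval_X, IsLocalization.Away.mul_invSelf,
            aeval_one, sub_self]) (AdjoinRoot.mk (C f * X - 1) p) := rfl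
  rw [this, AdjoinRoot.liftAlgHom_mk]; rfl

theorem aux_coeff (I : Ideal A) (f : A) (hfI : f ∈ I) {p q : A[X]}
    (hpq : p = (C f * X - 1) * q) (hp : p ∈ reesAlgebra I) : q ∈ reesAlgebra I := by
  rw [mem_reesAlgebra_iff] at hp ⊢
  intro n
  induction n with
  | zero => simp
  | succ n ih =>
    have h := hp (n + 1)
    rw [hpq] at h
    rw [sub_mul, one_mul, coeff_sub, mul_assoc, coeff_C_mul, coeff_X_mul] at h
    have : q.coeff (n + 1) = f * q.coeff n - p.coeff (n + 1) := by
      rw [hpq, sub_mul, one_mul, coeff_sub, mul_assoc, coeff_C_mul, coeff_X_mul]; ring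
    rw [this]
    refine sub_mem ?_ (hp (n + 1))
    rw [pow_succ']
    exact Ideal.mul_mem_mul hfI ih

end Aux

/-- The affine modification `A[It]/(1 - ft)` of a ring `A` along `(f)` with center `I`
is isomorphic, as an `A`-algebra, to the subring `A[I/f]` of the localization `A_f`
generated by `A` together with the elements `g/f`, `g ∈ I`. -/
theorem stmt_0 {A : Type*} [CommRing A] (I : Ideal A) (f : A)
    (hfI : f ∈ I) (hf : f ∈ nonZeroDivisors A)
    (hmem : (C f * X : A[X]) ∈ reesAlgebra I) :
    Nonempty
      ((↥(reesAlgebra I) ⧸ Ideal.span {(1 : reesAlgebra I) - ⟨C f * X, hmem⟩}) ≃ₐ[A]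
        ↥(Algebra.adjoin A
          ((fun g : A => algebraMap A (Localization.Away f) g *
            IsLocalization.Away.invSelf f) '' (I : Set A)))) := by
  classical
  set u := IsLocalization.Away.invSelf f (S := Localization.Away f) with hu
  set ψ : A[X] →ₐ[A] Localization.Away f := aeval u with hψ
  set S := Algebra.adjoin A
      ((fun g : A => algebraMap A (Localization.Away f) g *
        IsLocalization.Away.invSelf f) '' (I : Set A)) with hS
  have hmap : (reesAlgebra I).map ψ = S := by
    rw [← adjoin_monomial_eq_reesAlgebra, AlgHom.map_adjoin, hS]
    congr 1
    rw [Submodule.map_coe, ← Set.image_comp]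
    apply Set.image_congr
    intro g _
    simp [hψ, hu, aeval_monomial]
  set φ : reesAlgebra I →ₐ[A] Localization.Away f := ψ.comp (reesAlgebra I).val with hφ
  have hrange : φ.range = S := by rw [hφ, Subalgebra.range_comp_val, hmap]
  have hmemS : ∀ x : reesAlgebra I, φ x ∈ S := fun x => hrange ▸ ⟨x, rfl⟩
  set φ₂ : reesAlgebra I →ₐ[A] S := φ.codRestrict S hmemS with hφ₂
  have hsurj : Function.Surjective φ₂ := by
    rintro ⟨y, hy⟩
    rw [← hrange] at hy
    obtain ⟨x, hx⟩ := hy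
    exact ⟨x, Subtype.ext hx⟩
  have hzero : ∀ y : reesAlgebra I, φ₂ y = 0 ↔ ψ (y : A[X]) = 0 := by
    intro y
    rw [Subtype.ext_iff]
    rfl
  have hker : RingHom.ker φ₂ = Ideal.span {(1 : reesAlgebra I) - ⟨C f * X, hmem⟩} := by
    ext x
    rw [RingHom.mem_ker, Ideal.mem_span_singleton, hzero]
    constructor
    · intro hx
      obtain ⟨q, hq⟩ := aux_dvd f hx
      have hqmem : q ∈ reesAlgebra I := aux_coeff I f hfI hq x.2
      refine ⟨-⟨q, hqmem⟩, ?_⟩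
      apply Subtype.ext
      push_cast
      rw [hq]
      ring
    · rintro ⟨c, rfl⟩
      have h1 : ψ (((1 : reesAlgebra I) - ⟨C f * X, hmem⟩ : reesAlgebra I) : A[X]) = 0 := by
        push_cast
        simp [hψ, hu, IsLocalization.Away.mul_invSelf]
      push_cast
      rw [map_mul]
      rw [show ((((1 : reesAlgebra I) - ⟨C f * X, hmem⟩) : reesAlgebra I) : A[X])
        = 1 - C f * X from rfl] at h1
      rw [h1, zero_mul]
  exact ⟨(Ideal.quotientEquivAlgOfEq A hker.symm).trans
    (Ideal.quotientKerAlgEquivOfSurjective hsurj)⟩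
end

section
/- Any birational morphism q : Y → X of affine varieties over ℂ is an affine modification: there exist an ideal I ⊆ A = ℂ[X] and an element f ∈ I such that the induced inclusion of coordinate rings identifies ℂ[Y] with the subring A[I/f] of Frac A. -/
/-- Birational morphisms of affine varieties are affine modifications: if `A` is an
affine domain over `ℂ` and `B` is a finitely generated subalgebra of `Frac A`
containing `A` (the coordinate ring of `Y`, embedded via the birational morphism
`q : Y → X`), then `B = A[I/f]` for some ideal `I ⊆ A` and some `0 ≠ f ∈ I`. -/
theorem stmt_3 {A : Type*} [CommRing A] [IsDomain A] [Algebra ℂ A]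
    (hA : Algebra.FiniteType ℂ A)
    (B : Subalgebra A (FractionRing A)) (hB : B.FG) :
    ∃ (I : Ideal A) (f : A), f ∈ I ∧ f ≠ 0 ∧
      B = Algebra.adjoin A
        ((fun a => algebraMap A (FractionRing A) a / algebraMap A (FractionRing A) f) ''
          (I : Set A)) := by
  classical
  set K := FractionRing A
  obtain ⟨s, hs⟩ := hB
  obtain ⟨d, hd⟩ := IsLocalization.exist_integer_multiples_of_finset (nonZeroDivisors A) s
  set f : A := (d : A) with hf
  have hf0 : f ≠ 0 := nonZeroDivisors.ne_zero d.2
  have hfK : algebraMap A K f ≠ 0 :=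
    (map_ne_zero_iff _ (IsFractionRing.injective A K)).mpr hf0
  -- the A-linear map a ↦ a / f
  let φ : A →ₗ[A] K :=
    { toFun := fun a => algebraMap A K a / algebraMap A K f
      map_add' := by intro a b; simp [add_div]
      map_smul' := by intro r a; simp [Algebra.smul_def, mul_div_assoc] }
  let I : Ideal A := Submodule.comap φ (Subalgebra.toSubmodule B)
  have hφ : ∀ a : A, a ∈ I ↔ algebraMap A K a / algebraMap A K f ∈ B := fun a => Iff.rfl
  refine ⟨I, f, ?_, hf0, ?_⟩
  · rw [hφ, div_self hfK]; exact B.one_mem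
  · apply le_antisymm
    · rw [← hs]
      apply Algebra.adjoin_le
      intro x hx
      have hxB : x ∈ B := by rw [← hs]; exact Algebra.subset_adjoin hx
      obtain ⟨c, hc⟩ := hd x hx
      have hxc : x = algebraMap A K c / algebraMap A K f := by
        rw [hc, Algebra.smul_def]
        field_simp
        rfl
      refine Algebra.subset_adjoin ⟨c, ?_, hxc.symm⟩
      rw [SetLike.mem_coe, hφ, ← hxc]
      exact hxB
    · apply Algebra.adjoin_le
      rintro x ⟨a, ha, rfl⟩
      exact (hφ a).mp ha
end

section
/- With A, I, f, J, A' and J^st as above, let μ : A → A₁ = A/J be the quotient map, I₁ = μ(I), f₁ = μ(f). Then A'/J^st is isomorphic to the affine modification A₁[I₁/f₁] of A₁. -/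
/-! Inside the fraction field, `A[I/f]` lies in the localization `A_f`, so the map
`A_f → Frac(A/J)`, `a / f^k ↦ μ a / μ f^k`, restricts to it. Every element of `A[I/f]` has the
form `a / f^k` with `a ∈ I^k`; lifting numerators along the surjection `μ` shows that the image
is exactly `A₁[I₁/f₁]`, and `a / f^k` is sent to zero iff `a ∈ J`, so the kernel is `J^st`.
The first isomorphism theorem concludes. -/

section

variable {A : Type*} [CommRing A] (K : Type*) [Field K] [Algebra A K]

def affineModification (I : Ideal A) (f : A) : Subalgebra A K :=
  Algebra.adjoin A ((fun a => algebraMap A K a / algebraMap A K f) '' (I : Set A))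

variable {K} {I : Ideal A} {f : A}

theorem div_pow_mem_affineModification {k : ℕ} {b : A} (hb : b ∈ I ^ k) :
    algebraMap A K b / algebraMap A K f ^ k ∈ affineModification K I f := by
  induction k generalizing b with
  | zero => simp
  | succ k ih =>
    rw [pow_succ] at hb
    refine Submodule.mul_induction_on hb (fun c hc d hd => ?_) (fun x y hx hy => ?_)
    · rw [map_mul, pow_succ, mul_div_mul_comm]
      exact mul_mem (ih hc) (Algebra.subset_adjoin ⟨d, hd, rfl⟩)
    · rw [map_add, add_div]
      exact add_mem hx hy

theorem exists_mul_pow_eq_of_mem_affineModification (hfI : f ∈ I)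
    (hf : algebraMap A K f ≠ 0) {x : K} (hx : x ∈ affineModification K I f) :
    ∃ k : ℕ, ∃ a ∈ I ^ k, x * algebraMap A K f ^ k = algebraMap A K a := by
  induction hx using Algebra.adjoin_induction with
  | mem x hx =>
    obtain ⟨a, ha, rfl⟩ := hx
    exact ⟨1, a, by simpa using ha, by simp [div_mul_cancel₀ _ hf]⟩
  | algebraMap r => exact ⟨0, r, by simp, by simp⟩
  | add x y _ _ ihx ihy =>
    obtain ⟨k, a, ha, hxa⟩ := ihx
    obtain ⟨m, b, hb, hyb⟩ := ihy
    refine ⟨k + m, a * f ^ m + b * f ^ k, ?_, ?_⟩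
    · rw [pow_add]
      exact add_mem (Ideal.mul_mem_mul ha (Ideal.pow_mem_pow hfI m))
        (mul_comm (I ^ k) (I ^ m) ▸ Ideal.mul_mem_mul hb (Ideal.pow_mem_pow hfI k))
    · simp only [map_add, map_mul, map_pow, ← hxa, ← hyb]
      ring
  | mul x y _ _ ihx ihy =>
    obtain ⟨k, a, ha, hxa⟩ := ihx
    obtain ⟨m, b, hb, hyb⟩ := ihy
    refine ⟨k + m, a * b, pow_add I k m ▸ Ideal.mul_mem_mul ha hb, ?_⟩
    rw [map_mul, ← hxa, ← hyb]
    ring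

section Lift

variable [IsDomain A] [IsFractionRing A K]

variable (K) in
noncomputable abbrev awaySubalgebra (hf : f ≠ 0) : Subalgebra A K :=
  Localization.subalgebra.ofField K (Submonoid.powers f)
    (powers_le_nonZeroDivisors_of_noZeroDivisors hf)

theorem affineModification_le_awaySubalgebra (hf : f ≠ 0) :
    affineModification K I f ≤ awaySubalgebra K hf := by
  rw [affineModification, Algebra.adjoin_le_iff]
  rintro _ ⟨a, -, rfl⟩
  exact ⟨a, f, Submonoid.mem_powers f, div_eq_mul_inv _ _⟩

variable {L : Type*} [Field L]

variable (K I) in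
noncomputable def affineModification.lift (hf : f ≠ 0) (g : A →+* L) (hg : g f ≠ 0) :
    affineModification K I f →+* L :=
  (IsLocalization.Away.lift (S := awaySubalgebra K hf) f hg.isUnit).comp
    (Subalgebra.inclusion (affineModification_le_awaySubalgebra hf)).toRingHom

theorem affineModification.lift_eq_div (hf : f ≠ 0) {g : A →+* L} (hg : g f ≠ 0)
    {x : affineModification K I f} {k : ℕ} {a : A}
    (hx : (x : K) * algebraMap A K f ^ k = algebraMap A K a) :
    affineModification.lift K I hf g hg x = g a / g f ^ k := by
  set y := Subalgebra.inclusion (affineModification_le_awaySubalgebra hf) x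
  have hy : y * algebraMap A (awaySubalgebra K hf) f ^ k =
      algebraMap A (awaySubalgebra K hf) a := Subtype.ext hx
  have := congrArg (IsLocalization.Away.lift f hg.isUnit) hy
  rw [map_mul, map_pow, IsLocalization.Away.lift_eq, IsLocalization.Away.lift_eq] at this
  rw [eq_div_iff (pow_ne_zero k hg), ← this]
  rfl

theorem affineModification.lift_eq_zero_iff (hfI : f ∈ I) (hf : f ≠ 0) {g : A →+* L}
    (hg : g f ≠ 0) (x : affineModification K I f) :
    affineModification.lift K I hf g hg x = 0 ↔
      ∃ k : ℕ, ∃ j ∈ RingHom.ker g, (x : K) * algebraMap A K f ^ k = algebraMap A K j := by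
  constructor
  · intro hx
    obtain ⟨k, a, -, hxa⟩ :=
      exists_mul_pow_eq_of_mem_affineModification hfI (by simpa using hf) x.2
    rw [lift_eq_div hf hg hxa, div_eq_zero_iff] at hx
    exact ⟨k, a, hx.resolve_right (pow_ne_zero k hg), hxa⟩
  · rintro ⟨k, j, hj, hxj⟩
    rw [lift_eq_div hf hg hxj, RingHom.mem_ker.mp hj, zero_div]

theorem affineModification.range_lift {B : Type*} [CommRing B] [Algebra B L] {φ : A →+* B}
    (hφ : Function.Surjective φ) (hfI : f ∈ I) (hf : f ≠ 0) (hg : algebraMap B L (φ f) ≠ 0) :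
    (affineModification.lift K I hf ((algebraMap B L).comp φ) hg).range =
      (affineModification L (I.map φ) (φ f)).toSubring := by
  ext y
  constructor
  · rintro ⟨x, rfl⟩
    obtain ⟨k, a, ha, hxa⟩ :=
      exists_mul_pow_eq_of_mem_affineModification hfI (by simpa using hf) x.2
    rw [lift_eq_div hf hg hxa]
    exact div_pow_mem_affineModification (Ideal.map_pow φ I k ▸ Ideal.mem_map_of_mem φ ha)
  · intro hy
    obtain ⟨k, b, hb, hyb⟩ :=
      exists_mul_pow_eq_of_mem_affineModification (Ideal.mem_map_of_mem φ hfI) hg hy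
    rw [← Ideal.map_pow] at hb
    obtain ⟨a, ha, rfl⟩ := (Ideal.mem_map_iff_of_surjective φ hφ).mp hb
    have hfK : algebraMap A K f ^ k ≠ 0 := pow_ne_zero k (by simpa using hf)
    refine ⟨⟨_, div_pow_mem_affineModification ha⟩, ?_⟩
    rw [lift_eq_div hf hg (div_mul_cancel₀ _ hfK)]
    exact (div_eq_iff (pow_ne_zero k hg)).mpr hyb.symm

end Lift

end

theorem stmt_7_general {A : Type*} [CommRing A] [IsDomain A]
    (I : Ideal A) (f : A) (hfI : f ∈ I) (hf0 : f ≠ 0)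
    (J : Ideal A) [hJ : J.IsPrime] (hfJ : f ∉ J) :
    letI K := FractionRing A
    letI A' : Subalgebra A K :=
      Algebra.adjoin A ((fun a => algebraMap A K a / algebraMap A K f) '' (I : Set A))
    letI A₁ := A ⧸ J
    letI K₁ := FractionRing A₁
    letI μ := Ideal.Quotient.mk J
    letI I₁ : Ideal A₁ := Ideal.map μ I
    letI f₁ : A₁ := μ f
    letI A₁' : Subalgebra A₁ K₁ :=
      Algebra.adjoin A₁
        ((fun a => algebraMap A₁ K₁ a / algebraMap A₁ K₁ f₁) '' (I₁ : Set A₁))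
    ∃ Jst : Ideal A',
      (↑Jst : Set A') =
        {a' : A' | ∃ k : ℕ, ∃ j ∈ J,
          (a' : K) * (algebraMap A K f) ^ k = algebraMap A K j} ∧
      Nonempty ((A' ⧸ Jst) ≃+* A₁') := by
  set g := (algebraMap (A ⧸ J) (FractionRing (A ⧸ J))).comp (Ideal.Quotient.mk J)
  have hg : g f ≠ 0 := by
    simpa [g, Ideal.Quotient.eq_zero_iff_mem] using hfJ
  have hker : RingHom.ker g = J := by
    rw [RingHom.ker_comp_of_injective _ (IsFractionRing.injective _ _), Ideal.mk_ker]
  let Φ := affineModification.lift (FractionRing A) I hf0 g hg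
  refine ⟨RingHom.ker Φ, ?_, ⟨(RingHom.quotientKerEquivRange Φ).trans
    (RingEquiv.subringCongr
      (affineModification.range_lift Ideal.Quotient.mk_surjective hfI hf0 hg))⟩⟩
  ext x
  have hx := affineModification.lift_eq_zero_iff hfI hf0 hg x
  rw [hker] at hx
  exact RingHom.mem_ker.trans hx

/-- How a modification affects a subvariety: with `J^st` the strict transform of the
prime ideal `J` in `A' = A[I/f]`, one has `A'/J^st ≅ A₁[I₁/f₁]` where `A₁ = A/J`,
`I₁ = μ(I)`, `f₁ = μ(f)` for the quotient map `μ : A → A/J`. -/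
theorem stmt_7 {A : Type*} [CommRing A] [IsDomain A] [Algebra ℂ A]
    (I : Ideal A) (f : A) (hfI : f ∈ I) (hf0 : f ≠ 0)
    (J : Ideal A) [hJ : J.IsPrime] (hfJ : f ∉ J) :
    letI K := FractionRing A
    letI A' : Subalgebra A K :=
      Algebra.adjoin A ((fun a => algebraMap A K a / algebraMap A K f) '' (I : Set A))
    letI A₁ := A ⧸ J
    letI K₁ := FractionRing A₁
    letI μ := Ideal.Quotient.mk J
    letI I₁ : Ideal A₁ := Ideal.map μ I
    letI f₁ : A₁ := μ f
    letI A₁' : Subalgebra A₁ K₁ :=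
      Algebra.adjoin A₁
        ((fun a => algebraMap A₁ K₁ a / algebraMap A₁ K₁ f₁) '' (I₁ : Set A₁))
    ∃ Jst : Ideal A',
      (↑Jst : Set A') =
        {a' : A' | ∃ k : ℕ, ∃ j ∈ J,
          (a' : K) * (algebraMap A K f) ^ k = algebraMap A K j} ∧
      Nonempty ((A' ⧸ Jst) ≃+* A₁') :=
  stmt_7_general I f hfI hf0 J (hJ := hJ) hfJ
end

section
/- Let A be an affine domain over ℂ, I ⊆ A an ideal, f ∈ I nonzero, and ∂ a locally nilpotent derivation of A with ∂(f) = 0 and ∂(I) ⊆ I. Then ∂ extends uniquely to a locally nilpotent derivation ∂' of A' = A[I/f]. -/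
/-!
A localization is formally étale, so `Ω[K⁄ℂ] ≃ K ⊗[A] Ω[A⁄ℂ]` for the fraction field `K` of `A`,
and `∂` extends to a derivation `D` of `K`. As `D f = 0`, `D (a / f ^ k) = ∂ a / f ^ k`; in
particular `∂ I ⊆ I` makes `D` preserve `A' = A[I/f]`. Every `y ∈ A'` has `f ^ k * y ∈ A` for some
`k`, and `D^[n] (f ^ k * y) = f ^ k * D^[n] y`: this gives local nilpotency, and it shows that a
derivation of `A'` is determined by its values on `A`.
-/

namespace Derivation

section FormallyEtale

variable {R S T : Type*} [CommRing R] [CommRing S] [CommRing T] [Algebra R S] [Algebra R T]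
  [Algebra S T] [IsScalarTower R S T] [Algebra.FormallyEtale S T]

open KaehlerDifferential in
noncomputable def extendOfFormallyEtale (d : Derivation R S S) : Derivation R T T :=
  ((((Algebra.linearMap S T).comp d.liftKaehlerDifferential).liftBaseChange T).comp
    (tensorKaehlerEquivOfFormallyEtale R S T).symm.toLinearMap).compDer (D R T)

theorem extendOfFormallyEtale_algebraMap (d : Derivation R S S) (s : S) :
    d.extendOfFormallyEtale (algebraMap S T s) = algebraMap S T (d s) := by
  simp [extendOfFormallyEtale,
    KaehlerDifferential.tensorKaehlerEquivOfFormallyEtale_symm_D_algebraMap]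

end FormallyEtale

section Restrict

variable {R S T : Type*} [CommSemiring R] [CommSemiring S] [CommSemiring T] [Algebra R S]
  [Algebra R T] [Algebra S T] [IsScalarTower R S T]

def restrict (D : Derivation R T T) (B : Subalgebra S T) (hB : ∀ x ∈ B, D x ∈ B) :
    Derivation R B B where
  toFun x := ⟨D x, hB x x.2⟩
  map_add' x y := Subtype.ext (D.map_add x y)
  map_smul' c x := Subtype.ext (D.map_smul c (x : T))
  map_one_eq_zero' := Subtype.ext D.map_one_eq_zero
  leibniz' x y := Subtype.ext (D.leibniz (x : T) y)

end Restrict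

theorem iterate_mul_of_map_eq_zero {R B : Type*} [CommSemiring R] [CommSemiring B] [Algebra R B]
    (D : Derivation R B B) {s : B} (hs : D s = 0) (n : ℕ) (x : B) :
    D^[n] (s * x) = s * D^[n] x := by
  induction n generalizing x with
  | zero => rfl
  | succ n ih => simp [leibniz, hs, ih]

section Denominators

variable {R A B : Type*} [CommSemiring R] [CommSemiring A] [CommRing B] [NoZeroDivisors B]
  [Algebra R B] [Algebra A B] {f : A} (hf : algebraMap A B f ≠ 0)
  (hB : ∀ y : B, ∃ (k : ℕ) (a : A), algebraMap A B f ^ k * y = algebraMap A B a)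
include hf hB

theorem ext_of_algebraMap {δ₁ δ₂ : Derivation R B B}
    (h : ∀ a, δ₁ (algebraMap A B a) = δ₂ (algebraMap A B a)) : δ₁ = δ₂ := by
  ext y
  obtain ⟨k, a, hy⟩ := hB y
  have hfk : δ₁ (algebraMap A B f ^ k) = δ₂ (algebraMap A B f ^ k) := by
    simpa only [map_pow] using h (f ^ k)
  have key := congrArg₂ (· - ·) (congrArg δ₁ hy) (congrArg δ₂ hy)
  simp only [leibniz, smul_eq_mul, hfk, h, sub_self] at key
  exact mul_left_cancel₀ (pow_ne_zero k hf) (sub_eq_zero.mp (by linear_combination key))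

theorem exists_iterate_eq_zero_of_algebraMap (D : Derivation R B B)
    (hDf : D (algebraMap A B f) = 0)
    (hA : ∀ a : A, ∃ n, D^[n] (algebraMap A B a) = 0) (y : B) : ∃ n, D^[n] y = 0 := by
  obtain ⟨k, a, hy⟩ := hB y
  obtain ⟨n, hn⟩ := hA a
  have hfk : D (algebraMap A B f ^ k) = 0 := by simp [leibniz_pow, hDf]
  refine ⟨n, (mul_eq_zero.mp ?_).resolve_left (pow_ne_zero k hf)⟩
  rw [← iterate_mul_of_map_eq_zero D hfk, hy, hn]

end Denominators

end Derivation

section AffineModification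

variable {A K : Type*} [CommSemiring A] [Field K] [Algebra A K] {f : A}

theorem exists_pow_mul_eq_algebraMap_of_mem_adjoin_div (hf : algebraMap A K f ≠ 0) {s : Set A}
    {x : K} (hx : x ∈ Algebra.adjoin A ((fun a => algebraMap A K a / algebraMap A K f) '' s)) :
    ∃ (k : ℕ) (a : A), algebraMap A K f ^ k * x = algebraMap A K a := by
  induction hx using Algebra.adjoin_induction with
  | mem x hx =>
    obtain ⟨a, -, rfl⟩ := hx
    exact ⟨1, a, by field_simp⟩
  | algebraMap r => exact ⟨0, r, by simp⟩
  | add x y _ _ ihx ihy =>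
    obtain ⟨k, a, hx⟩ := ihx
    obtain ⟨l, b, hy⟩ := ihy
    refine ⟨k + l, f ^ l * a + f ^ k * b, ?_⟩
    simp only [map_add, map_mul, map_pow, ← hx, ← hy]
    ring
  | mul x y _ _ ihx ihy =>
    obtain ⟨k, a, hx⟩ := ihx
    obtain ⟨l, b, hy⟩ := ihy
    refine ⟨k + l, a * b, ?_⟩
    simp only [map_mul, ← hx, ← hy]
    ring

theorem Derivation.map_mem_adjoin_div {R : Type*} [CommRing R] [Algebra R K]
    (D : Derivation R K K) (d : A → A) (hD : ∀ a, D (algebraMap A K a) = algebraMap A K (d a))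
    (hdf : d f = 0) {s : Set A} (hds : ∀ a ∈ s, d a ∈ s) {x : K}
    (hx : x ∈ Algebra.adjoin A ((fun a => algebraMap A K a / algebraMap A K f) '' s)) :
    D x ∈ Algebra.adjoin A ((fun a => algebraMap A K a / algebraMap A K f) '' s) := by
  induction hx using Algebra.adjoin_induction with
  | mem x hx =>
    obtain ⟨a, ha, rfl⟩ := hx
    rw [leibniz_div_const _ _ _ (by rw [hD, hdf, map_zero]), hD, smul_eq_mul, inv_mul_eq_div]
    exact Algebra.subset_adjoin ⟨d a, hds a ha, rfl⟩
  | algebraMap r => exact hD r ▸ Subalgebra.algebraMap_mem _ _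
  | add x y _ _ ihx ihy => exact (D.map_add x y).symm ▸ add_mem ihx ihy
  | mul x y hx hy ihx ihy =>
    rw [leibniz, smul_eq_mul, smul_eq_mul]
    exact add_mem (mul_mem hx ihy) (mul_mem hy ihx)

end AffineModification

theorem stmt_9_general {A : Type*} [CommRing A] [IsDomain A] [Algebra ℂ A]
    (I : Ideal A) (f : A) (hf0 : f ≠ 0)
    (d : Derivation ℂ A A) (hnil : ∀ a : A, ∃ n : ℕ, (fun x => d x)^[n] a = 0)
    (hdf : d f = 0) (hdI : ∀ a ∈ I, d a ∈ I) :
    letI K := FractionRing A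
    letI A' : Subalgebra A K :=
      Algebra.adjoin A ((fun a => algebraMap A K a / algebraMap A K f) '' (I : Set A))
    ∃! dd : Derivation ℂ A' A',
      (∀ a : A,
        dd ⟨algebraMap A K a, Subalgebra.algebraMap_mem _ a⟩ =
          ⟨algebraMap A K (d a), Subalgebra.algebraMap_mem _ (d a)⟩) ∧
      (∀ x : A', ∃ n : ℕ, (fun y => dd y)^[n] x = 0) := by
  set K := FractionRing A
  set A' : Subalgebra A K :=
    Algebra.adjoin A ((fun a => algebraMap A K a / algebraMap A K f) '' (I : Set A))
  have hfK : algebraMap A K f ≠ 0 :=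
    IsFractionRing.to_map_ne_zero_of_mem_nonZeroDivisors (mem_nonZeroDivisors_of_ne_zero hf0)
  have hfA' : algebraMap A A' f ≠ 0 := fun h => hfK (congrArg Subtype.val h)
  have hden : ∀ y : A', ∃ (k : ℕ) (a : A), algebraMap A A' f ^ k * y = algebraMap A A' a := by
    intro y
    obtain ⟨k, a, h⟩ := exists_pow_mul_eq_algebraMap_of_mem_adjoin_div hfK y.2
    exact ⟨k, a, Subtype.ext h⟩
  let D := d.extendOfFormallyEtale (T := K)
  have hD : ∀ a, D (algebraMap A K a) = algebraMap A K (d a) := d.extendOfFormallyEtale_algebraMap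
  let dd := D.restrict A' fun x hx => D.map_mem_adjoin_div d hD hdf hdI hx
  have hdd : ∀ a, dd (algebraMap A A' a) = algebraMap A A' (d a) := fun a => Subtype.ext (hD a)
  have hddf : dd (algebraMap A A' f) = 0 := by rw [hdd, hdf, map_zero]
  refine ⟨dd, ⟨hdd, Derivation.exists_iterate_eq_zero_of_algebraMap hfA' hden dd hddf
    fun a => ?_⟩, ?_⟩
  · obtain ⟨n, hn⟩ := hnil a
    have hcomm : Function.Semiconj (algebraMap A A') d dd := fun a => (hdd a).symm
    exact ⟨n, by rw [← hcomm.iterate_right n a, hn, map_zero]⟩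
  · rintro dd' ⟨hdd', -⟩
    exact Derivation.ext_of_algebraMap hfA' hden fun a => (hdd' a).trans (hdd a).symm

set_option synthInstance.maxHeartbeats 1000000 in
/-- Lifting locally nilpotent derivations to an affine modification: a locally
nilpotent derivation `∂` of `A` with `∂ f = 0` and `∂ I ⊆ I` extends uniquely to a
locally nilpotent derivation of `A' = A[I/f]`. -/
theorem stmt_9 {A : Type*} [CommRing A] [IsDomain A] [Algebra ℂ A]
    [NoZeroSMulDivisors ℂ A] (hA : Algebra.FiniteType ℂ A)
    (I : Ideal A) (f : A) (hfI : f ∈ I) (hf0 : f ≠ 0)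
    (d : Derivation ℂ A A) (hnil : ∀ a : A, ∃ n : ℕ, (fun x => d x)^[n] a = 0)
    (hdf : d f = 0) (hdI : ∀ a ∈ I, d a ∈ I) :
    letI K := FractionRing A
    letI A' : Subalgebra A K :=
      Algebra.adjoin A ((fun a => algebraMap A K a / algebraMap A K f) '' (I : Set A))
    ∃! dd : Derivation ℂ A' A',
      (∀ a : A,
        dd ⟨algebraMap A K a, Subalgebra.algebraMap_mem _ a⟩ =
          ⟨algebraMap A K (d a), Subalgebra.algebraMap_mem _ (d a)⟩) ∧
      (∀ x : A', ∃ n : ℕ, (fun y => dd y)^[n] x = 0) :=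
  stmt_9_general I f hf0 d hnil hdf hdI
end
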